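/- Consider, for a positive integer n, the star instance with center node v, sinks t_1, …, t_{2n}, one source s_T for each n-element subset T of {1, …, 2n}, arcs (s_T, v) and (v, t_i), and commodities K = {(s_T, t_i) : i ∈ T}. Then for every node set W ⊆ N such that the subgraph of D induced by W is connected, and every nonempty K' ⊆ K with s_k ∈ W and t_k ∉ W for all k ∈ K' and with δ⁺_{P_k}(W) ∩ δ⁺_{P_j}(W) = ∅ for all distinct k, j ∈ K', one has ⌈(|K'| + |W| − |S(K')|)/|W|⌉ ≤ ⌈(2n+1)/3⌉. -/

import Mathlib

open scoped Classical

variable {V : Type*}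

/-- The arcs traversed by a list of vertices. -/
def listArcs (p : List V) : Set (V × V) := {a | a ∈ p.zip p.tail}

/-- `p` is a directed walk from `s` to `t` using only arcs in `E`. -/
def IsDiwalk (E : Set (V × V)) (p : List V) (s t : V) : Prop :=
  p ≠ [] ∧ p.head? = some s ∧ p.getLast? = some t ∧
    p.Chain' (fun u w => (u, w) ∈ E)

/-- `p` is a directed path from `s` to `t` using only arcs in `E`. -/
def IsDipath (E : Set (V × V)) (p : List V) (s t : V) : Prop :=
  IsDiwalk E p s t ∧ p.Nodup

/-- Transitive closure of an arc set: an arc `(i, j)` whenever `i ≠ j` and there is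
a directed path from `i` to `j`. -/
def cl (E : Set (V × V)) : Set (V × V) :=
  {a | a.1 ≠ a.2 ∧ Relation.ReflTransGen (fun u w => (u, w) ∈ E) a.1 a.2}

/-- The arcs of `E` leaving node set `U`: `δ⁺_E(U)`. -/
def cut (E : Set (V × V)) (U : Set V) : Set (V × V) :=
  {a ∈ E | a.1 ∈ U ∧ a.2 ∉ U}

/-- The underlying undirected simple graph of an arc set. -/
def undirected (E : Set (V × V)) : SimpleGraph V where
  Adj u w := u ≠ w ∧ ((u, w) ∈ E ∨ (w, u) ∈ E)
  symm := ⟨fun u w h => ⟨h.1.symm, h.2.symm⟩⟩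
  loopless := ⟨fun u h => h.1 rfl⟩

/-- `H` is a feasible subgraph of `cl A`: for every commodity `k ∈ K` there is a
directed `s_k,t_k`-path in `H` using only arcs of `cl (P k)`. -/
def Feasible (A : Set (V × V)) (K : Finset (V × V)) (P : V × V → List V)
    (H : Set (V × V)) : Prop :=
  H ⊆ cl A ∧ ∀ k ∈ K, ∃ p : List V,
    IsDipath (H ∩ cl (listArcs (P k))) p k.1 k.2

/-- Out-degree of `v` in arc set `H`. -/
noncomputable def outDeg (H : Set (V × V)) (v : V) : ℕ := {w | (v, w) ∈ H}.ncard

/-- Maximum out-degree `Δ⁺(H)`. -/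
noncomputable def maxOutDeg [Fintype V] (H : Set (V × V)) : ℕ :=
  Finset.univ.sup fun v => outDeg H v

/-- `Δ*`: the minimum of `Δ⁺(H)` over all feasible subgraphs `H` of `cl A`. -/
noncomputable def DeltaStar [Fintype V] (A : Set (V × V)) (K : Finset (V × V))
    (P : V × V → List V) : ℕ :=
  sInf {d | ∃ H, Feasible A K P H ∧ maxOutDeg H = d}

/-- The set `S(K')` of sources of a commodity set. -/
def srcs [DecidableEq V] (K' : Finset (V × V)) : Finset V := K'.image Prod.fst

/-- A tree instance: a finite nonempty commodity set of nontrivial commodities,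
the underlying undirected graph of `A` is a tree, and `P k` is the (unique)
directed `s_k,t_k`-path in `A` for each commodity `k`. -/
def IsTreeInstance (A : Set (V × V)) (K : Finset (V × V))
    (P : V × V → List V) : Prop :=
  K.Nonempty ∧ (∀ k ∈ K, k.1 ≠ k.2) ∧ (undirected A).IsTree ∧
    ∀ k ∈ K, IsDipath A (P k) k.1 k.2

/-- The node type of the hard star instance: one source per `n`-element subset of
`{1, …, 2n}`, `2n` sinks, and a center. -/
abbrev StarNode (n : ℕ) :=
  ({T : Finset (Fin (2 * n)) // T.card = n} ⊕ Fin (2 * n)) ⊕ Unit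

/-- The center node. -/
def center (n : ℕ) : StarNode n := Sum.inr ()

/-- The source node indexed by an `n`-element subset `T` of `{1, …, 2n}`. -/
def src {n : ℕ} (T : {T : Finset (Fin (2 * n)) // T.card = n}) : StarNode n :=
  Sum.inl (Sum.inl T)

/-- The sink node `t_i`. -/
def snk {n : ℕ} (i : Fin (2 * n)) : StarNode n := Sum.inl (Sum.inr i)

/-- The arcs of the hard star instance: `(s_T, v)` for each `n`-element subset `T`,
and `(v, t_i)` for each `i`. -/
def starArcs (n : ℕ) : Set (StarNode n × StarNode n) :=
  {a | (∃ T, a = (src T, center n)) ∨ ∃ i, a = (center n, snk i)}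

/-- The commodity set: `(s_T, t_i)` for every `n`-element subset `T` and `i ∈ T`. -/
noncomputable def starK (n : ℕ) : Finset (StarNode n × StarNode n) :=
  Finset.univ.filter fun a =>
    ∃ (T : {T : Finset (Fin (2 * n)) // T.card = n}) (i : Fin (2 * n)),
      i ∈ T.1 ∧ a = (src T, snk i)

/-- The designated paths: each commodity is routed `s_k, v, t_k` through the center. -/
def starP (n : ℕ) : StarNode n × StarNode n → List (StarNode n) :=
  fun k => [k.1, center n, k.2]

lemma mem_cut {E : Set (V × V)} {U : Set V} {a : V × V} :
    a ∈ cut E U ↔ a ∈ E ∧ a.1 ∈ U ∧ a.2 ∉ U := Iff.rfl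
lemma snk_inj {n : ℕ} : Function.Injective (snk (n := n)) := by
  intro a b h; simpa [snk] using h
lemma src_inj {n : ℕ} : Function.Injective (src (n := n)) := by
  intro a b h; simpa [src] using h
lemma mem_starK {n : ℕ} {k : StarNode n × StarNode n} :
    k ∈ starK n ↔ ∃ T i, i ∈ T.1 ∧ k = (src T, snk i) := by
  simp [starK]
lemma mem_listArcs_starP {n : ℕ} {k a : StarNode n × StarNode n} :
    a ∈ listArcs (starP n k) ↔ a = (k.1, center n) ∨ a = (center n, k.2) := by
  simp [listArcs, starP, List.zip]
lemma eq_of_no_adj {α : Type*} {G : SimpleGraph α} (hG : ∀ a b, ¬ G.Adj a b)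
    {x y : α} (w : G.Walk x y) : x = y := by
  cases w with
  | nil => rfl
  | cons h _ => exact absurd h (hG _ _)
lemma arith (n a m p w : ℕ) (hn : 1 ≤ n) (hm : 1 ≤ m) (h1 : a + p ≤ 2*n)
    (h2 : a ≤ n*m) (h3 : 1 + m + p ≤ w) : 3*a + 3*w ≤ (2*n+1)*w + 3*m := by
  rcases le_or_gt 2 (m + p) with hcase | hcase
  · zify at *
    nlinarith [mul_le_mul_of_nonneg_left h3 (by nlinarith : (0:ℤ) ≤ 2*n-2),
      mul_le_mul_of_nonneg_left hcase (by nlinarith : (0:ℤ) ≤ 2*n+1)]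
  · have hmp : m = 1 ∧ p = 0 := by omega
    obtain ⟨hm1, hp⟩ := hmp
    zify at *
    nlinarith [mul_le_mul_of_nonneg_left h3 (by nlinarith : (0:ℤ) ≤ 2*n-2)]


/-- For the hard star instance, every witness set `(W, K')` gives
lower bound at most `⌈(2n+1)/3⌉`. -/
theorem star_gap_instance_witness_bound (n : ℕ) (hn : 0 < n)
    (W : Finset (StarNode n))
    (hWconn :
      (SimpleGraph.induce (W : Set (StarNode n)) (undirected (starArcs n))).Connected)
    (K' : Finset (StarNode n × StarNode n)) (hsub : K' ⊆ starK n) (hne : K'.Nonempty)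
    (hsrc : ∀ k ∈ K', k.1 ∈ W) (hsink : ∀ k ∈ K', k.2 ∉ W)
    (hdisj : ∀ k ∈ K', ∀ j ∈ K', k ≠ j →
      cut (listArcs (starP n k)) (W : Set (StarNode n)) ∩
        cut (listArcs (starP n j)) (W : Set (StarNode n)) = ∅) :
    ⌈((K'.card : ℚ) + W.card - (srcs K').card) / W.card⌉ ≤ ⌈((2 * n + 1 : ℚ)) / 3⌉ := by
  classical
  obtain ⟨k0, hk0⟩ := hne
  have hs0 : k0.1 ∈ W := hsrc _ hk0
  have hWpos : 0 < W.card := Finset.card_pos.2 ⟨k0.1, hs0⟩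
  suffices h : 3 * K'.card + 3 * W.card ≤ (2 * n + 1) * W.card + 3 * (srcs K').card by
    have hWQ : (0:ℚ) < (W.card : ℚ) := by exact_mod_cast hWpos
    apply Int.ceil_le_ceil
    rw [div_le_div_iff₀ hWQ (by norm_num : (0:ℚ) < 3)]
    have hQ : 3 * (K'.card:ℚ) + 3 * W.card ≤ (2 * n + 1) * W.card + 3 * (srcs K').card := by
      exact_mod_cast h
    push_cast at hQ ⊢
    linarith
  by_cases hc : center n ∈ W
  · -- center ∈ W: sinks of K' are pairwise distinct
    have hinj2 : ∀ k ∈ K', ∀ j ∈ K', k.2 = j.2 → k = j := by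
      intro k hk j hj h2
      by_contra hkj
      have e1 : (center n, k.2) ∈ cut (listArcs (starP n k)) (W : Set (StarNode n)) :=
        ⟨mem_listArcs_starP.2 (Or.inr rfl), by simpa using hc, by simpa using hsink k hk⟩
      have e2 : (center n, k.2) ∈ cut (listArcs (starP n j)) (W : Set (StarNode n)) :=
        ⟨mem_listArcs_starP.2 (Or.inr (by rw [h2])), by simpa using hc,
          by simp only []; rw [show (center n, k.2).2 = j.2 from h2]; simpa using hsink j hj⟩
      have := hdisj k hk j hj hkj
      exact absurd (Set.mem_inter e1 e2) (by simp [this])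
    set SnkAll : Finset (StarNode n) := Finset.univ.image snk with hSnkAll
    have hSnkCard : SnkAll.card = 2 * n := by
      rw [hSnkAll, Finset.card_image_of_injective _ snk_inj, Finset.card_univ]
      simp
    set p := (SnkAll ∩ W).card with hp
    -- (1) K'.card + p ≤ 2n
    have h1 : K'.card + p ≤ 2 * n := by
      have hle : K'.card ≤ (SnkAll \ W).card := by
        apply Finset.card_le_card_of_injOn Prod.snd
        · intro k hk
          obtain ⟨T, i, hiT, hkeq⟩ := mem_starK.1 (hsub hk)
          rw [Finset.mem_coe, Finset.mem_sdiff]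
          constructor
          · rw [hkeq]; exact Finset.mem_image_of_mem _ (Finset.mem_univ i)
          · exact hsink k hk
        · intro x hx y hy hxy
          exact hinj2 x (by simpa using hx) y (by simpa using hy) hxy
      have := Finset.card_sdiff_add_card_inter SnkAll W
      omega
    -- (2) K'.card ≤ n * m
    have h2 : K'.card ≤ n * (srcs K').card := by
      show K'.card ≤ n * (K'.image Prod.fst).card
      apply Finset.card_le_mul_card_image
      intro x hx
      obtain ⟨k, hk, hkx⟩ := Finset.mem_image.1 hx
      obtain ⟨T, i, hiT, hkeq⟩ := mem_starK.1 (hsub hk)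
      have hxT : x = src T := by rw [← hkx, hkeq]
      have hle : (K'.filter fun y => y.1 = x).card ≤ (T.1.image snk).card := by
        apply Finset.card_le_card_of_injOn Prod.snd
        · intro j hj
          obtain ⟨hjK, hj1⟩ := Finset.mem_filter.1 hj
          obtain ⟨T', i', hiT', hjeq⟩ := mem_starK.1 (hsub hjK)
          have hTT : T' = T := by
            apply src_inj
            rw [← show j.1 = src T' by rw [hjeq], hj1, hxT]
          rw [hjeq]
          exact Finset.mem_image_of_mem _ (hTT ▸ hiT')
        · intro a ha b hb hab
          simp only [Finset.coe_filter, Set.mem_setOf_eq] at ha hb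
          exact hinj2 a ha.1 b hb.1 hab
      calc (K'.filter fun y => y.1 = x).card ≤ (T.1.image snk).card := hle
        _ ≤ T.1.card := Finset.card_image_le
        _ = n := T.2
    -- (3) 1 + m + p ≤ w
    have h3 : 1 + (srcs K').card + p ≤ W.card := by
      have hsubW : insert (center n) (srcs K' ∪ (SnkAll ∩ W)) ⊆ W := by
        intro x hx
        rcases Finset.mem_insert.1 hx with h | h
        · exact h ▸ hc
        rcases Finset.mem_union.1 h with h | h
        · obtain ⟨k, hk, rfl⟩ := Finset.mem_image.1 h; exact hsrc k hk
        · exact (Finset.mem_inter.1 h).2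
      have hcnotin : center n ∉ srcs K' ∪ (SnkAll ∩ W) := by
        intro hx
        rcases Finset.mem_union.1 hx with h | h
        · obtain ⟨k, hk, hk1⟩ := Finset.mem_image.1 h
          obtain ⟨T, i, _, hkeq⟩ := mem_starK.1 (hsub hk)
          rw [hkeq] at hk1
          exact absurd hk1 (by simp [src, center])
        · obtain ⟨i, _, hi⟩ := Finset.mem_image.1 (Finset.mem_inter.1 h).1
          exact absurd hi (by simp [snk, center])
      have hdisj2 : Disjoint (srcs K') (SnkAll ∩ W) := by
        rw [Finset.disjoint_left]
        intro x hx1 hx2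
        obtain ⟨k, hk, hk1⟩ := Finset.mem_image.1 hx1
        obtain ⟨T, i, _, hkeq⟩ := mem_starK.1 (hsub hk)
        obtain ⟨i', _, hi'⟩ := Finset.mem_image.1 (Finset.mem_inter.1 hx2).1
        rw [← hk1] at hi'
        rw [hkeq] at hi'
        exact absurd hi' (by simp [snk, src])
      calc 1 + (srcs K').card + p
          = (insert (center n) (srcs K' ∪ (SnkAll ∩ W))).card := by
            rw [Finset.card_insert_of_notMem hcnotin,
              Finset.card_union_of_disjoint hdisj2]
            ring
        _ ≤ W.card := Finset.card_le_card hsubW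
    have hm1 : 1 ≤ (srcs K').card :=
      Finset.card_pos.2 ((Finset.image_nonempty).2 ⟨k0, hk0⟩)
    exact arith n K'.card (srcs K').card p W.card hn hm1 h1 h2 h3
  · -- center ∉ W: W and K' are singletons
    have hnoadj : ∀ a b : (W : Set (StarNode n)),
        ¬ (SimpleGraph.induce (W : Set (StarNode n)) (undirected (starArcs n))).Adj a b := by
      intro a b hab
      have hor := (show (a : StarNode n) ≠ b ∧ (((a : StarNode n), (b : StarNode n)) ∈ starArcs n ∨
        ((b : StarNode n), (a : StarNode n)) ∈ starArcs n) from hab).2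
      have hcW : center n ∈ W := by
        rcases hor with h | h <;>
          rcases h with ⟨T, hT⟩ | ⟨i, hi⟩ <;>
            [skip; skip; skip; skip]
        · have : (b : StarNode n) = center n := congrArg Prod.snd hT
          exact this ▸ (Finset.mem_coe.1 b.2)
        · have : (a : StarNode n) = center n := congrArg Prod.fst hi
          exact this ▸ (Finset.mem_coe.1 a.2)
        · have : (a : StarNode n) = center n := congrArg Prod.snd hT
          exact this ▸ (Finset.mem_coe.1 a.2)
        · have : (b : StarNode n) = center n := congrArg Prod.fst hi
          exact this ▸ (Finset.mem_coe.1 b.2)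
      exact hc hcW
    have hsingle : ∀ x ∈ W, x = k0.1 := by
      intro x hx
      obtain ⟨pw⟩ := hWconn ⟨x, by simpa using hx⟩ ⟨k0.1, by simpa using hs0⟩
      exact congrArg Subtype.val (eq_of_no_adj hnoadj pw)
    have hK'eq : K' = {k0} := by
      apply Finset.eq_singleton_iff_unique_mem.2
      refine ⟨hk0, fun k hk => ?_⟩
      by_contra hkne
      have hk1 : k.1 = k0.1 := hsingle _ (hsrc k hk)
      have e1 : (k0.1, center n) ∈ cut (listArcs (starP n k)) (W : Set (StarNode n)) :=
        ⟨mem_listArcs_starP.2 (Or.inl (by rw [hk1])), by simpa using hs0, by simpa using hc⟩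
      have e2 : (k0.1, center n) ∈ cut (listArcs (starP n k0)) (W : Set (StarNode n)) :=
        ⟨mem_listArcs_starP.2 (Or.inl rfl), by simpa using hs0, by simpa using hc⟩
      have := hdisj k hk k0 hk0 hkne
      exact absurd (Set.mem_inter e1 e2) (by simp [this])
    have hWeq : W = {k0.1} := Finset.eq_singleton_iff_unique_mem.2 ⟨hs0, hsingle⟩
    rw [hK'eq, hWeq]
    simp [srcs]
    omega
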